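/- arXiv:2111.01893 — 2 statements merged into one kernel-verified Lean document; each statement's English description precedes it below -/
import Mathlib

section
/- Let p be an odd prime and m ≥ 1. The group GL₂(ℤ_p) decomposes as a disjoint union of double cosets B(ℤ_p)·γ_{i,a}·K_p(m), where the representatives are: γ_{0,a} = [[0,-1],[1,a]] for a ranging over ℤ_p/p^mℤ_p; γ_{i,a} = [[1,0],[a p^i,1]] for 1 ≤ i ≤ m−1 and a ranging over (ℤ_p/p^{m−i}ℤ_p)^×; and γ_{m,0} = identity. -/
/-!
The double coset of `g` is read off from the bottom row `(c, d)` of `g`: left multiplication by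
`B(ℤ_p)` scales it by a unit and right multiplication by `K_p(m)` changes it only modulo `p^m`.
Since `det g` is a unit, `c` or `d` is a unit. If `c` is a unit the row is a multiple of `(1, a)`,
the bottom row of `γ_{0,a}`. Otherwise it is a multiple of `(x, 1)`, and writing
`x ≡ a p^i mod p^m` with `a` a unit (or `x ≡ 0`, `i = m`) gives `γ_{i,a}`; conversely the
divisibility of `a p^i` by the powers `p^n`, `n ≤ m`, recovers `i`, and then `a` modulo `p^(m-i)`.
-/

open scoped Matrix

namespace Stmt1

variable (p : ℕ) [Fact p.Prime]

/-- The upper-triangular Borel subgroup of `GL₂(ℤ_p)`, viewed at the level of matrices: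
invertible matrices with vanishing lower-left entry. -/
def Borel : Set (Matrix (Fin 2) (Fin 2) ℤ_[p]) :=
  {b | IsUnit b.det ∧ b 1 0 = 0}

/-- The principal congruence subgroup `K_p(m) = 1 + p^m M₂(ℤ_p)`, at the level of matrices. -/
def Kcong (m : ℕ) : Set (Matrix (Fin 2) (Fin 2) ℤ_[p]) :=
  {k | ∃ A : Matrix (Fin 2) (Fin 2) ℤ_[p], k = 1 + (p : ℤ_[p]) ^ m • A}

/-- `g` and `h` lie in the same double coset `B(ℤ_p) h K_p(m)`. -/
def DosetRel (m : ℕ) (g h : Matrix (Fin 2) (Fin 2) ℤ_[p]) : Prop :=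
  ∃ b ∈ Borel p, ∃ k ∈ Kcong p m, g = b * h * k

/-- The double coset representatives `γ_{i,a}`. -/
noncomputable def γ (m i : ℕ) (a : ℤ_[p]) : Matrix (Fin 2) (Fin 2) ℤ_[p] :=
  if i = 0 then !![0, -1; 1, a] else if i = m then 1 else !![1, 0; a * (p : ℤ_[p]) ^ i, 1]

section LocalRing

variable {R : Type*} [CommRing R] [IsLocalRing R]

theorem isUnit_or_isUnit_of_isUnit_det {g : Matrix (Fin 2) (Fin 2) R} (hg : IsUnit g.det) :
    IsUnit (g 1 0) ∨ IsUnit (g 1 1) := by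
  by_contra! h
  refine (IsLocalRing.mem_maximalIdeal _).mp ?_ hg
  rw [Matrix.det_fin_two]
  exact Ideal.sub_mem _ (Ideal.mul_mem_left _ _ ((IsLocalRing.mem_maximalIdeal _).mpr h.2))
    (Ideal.mul_mem_left _ _ ((IsLocalRing.mem_maximalIdeal _).mpr h.1))

end LocalRing

section Divisibility

variable {R : Type*} [CommRing R]

theorem dvd_sub_of_dvd_one_sub_of_dvd_sub_mul {n u x y : R} (hu : n ∣ 1 - u)
    (h : n ∣ x - u * y) : n ∣ x - y := by
  have := dvd_sub h (dvd_mul_of_dvd_left hu y)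
  rwa [show x - u * y - (1 - u) * y = x - y by ring] at this

theorem not_pow_dvd_sub_of_isUnit {π x y : R} (hπ : ¬IsUnit π) {m : ℕ} (hm : m ≠ 0)
    (hx : IsUnit x) (hy : π ∣ y) : ¬π ^ m ∣ x - y := fun h =>
  hπ (isUnit_of_dvd_unit ((dvd_iff_dvd_of_dvd_sub ((dvd_pow_self π hm).trans h)).mpr hy) hx)

variable [IsDomain R]

theorem pow_dvd_mul_pow_iff {π : R} (hπ0 : π ≠ 0) (hπ : ¬IsUnit π) {m n i : ℕ} {a : R}
    (hn : n ≤ m) (hi : i ≤ m)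
    (hia : i = m → a = 0) (hiu : i < m → IsUnit a) : π ^ n ∣ a * π ^ i ↔ n ≤ i := by
  rcases hi.lt_or_eq with h | rfl
  · rw [(hiu h).dvd_mul_left, pow_dvd_pow_iff hπ0 hπ]
  · simp [hia rfl, hn]

theorem eq_and_dvd_sub_of_pow_dvd_sub {π : R} (hπ0 : π ≠ 0) (hπ : ¬IsUnit π) {m i j : ℕ}
    {a b : R} (hi : i ≤ m) (hj : j ≤ m)
    (hia : i = m → a = 0) (hiu : i < m → IsUnit a)
    (hjb : j = m → b = 0) (hju : j < m → IsUnit b)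
    (h : π ^ m ∣ a * π ^ i - b * π ^ j) : i = j ∧ π ^ (m - i) ∣ a - b := by
  have key : ∀ n ≤ m, (π ^ n ∣ a * π ^ i ↔ π ^ n ∣ b * π ^ j) := fun n hn =>
    dvd_iff_dvd_of_dvd_sub ((pow_dvd_pow π hn).trans h)
  have hi_dvd : π ^ i ∣ b * π ^ j :=
    (key i hi).mp ((pow_dvd_mul_pow_iff hπ0 hπ hi hi hia hiu).mpr le_rfl)
  have hj_dvd : π ^ j ∣ a * π ^ i :=
    (key j hj).mpr ((pow_dvd_mul_pow_iff hπ0 hπ hj hj hjb hju).mpr le_rfl)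
  obtain rfl : i = j := le_antisymm ((pow_dvd_mul_pow_iff hπ0 hπ hi hj hjb hju).mp hi_dvd)
    ((pow_dvd_mul_pow_iff hπ0 hπ hj hi hia hiu).mp hj_dvd)
  refine ⟨rfl, (mul_dvd_mul_iff_right (pow_ne_zero i hπ0)).mp ?_⟩
  rwa [pow_sub_mul_pow π hi, sub_mul]

end Divisibility

theorem exists_pow_dvd_sub_mul_p_pow {m : ℕ} (hm : m ≠ 0)
    {x : ℤ_[p]} (hx : ¬IsUnit x) :
    ∃ i ≤ m, ∃ a : ℤ_[p], 1 ≤ i ∧ (i = m → a = 0) ∧ (i < m → IsUnit a) ∧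
      (p : ℤ_[p]) ^ m ∣ x - a * (p : ℤ_[p]) ^ i := by
  by_cases hdvd : (p : ℤ_[p]) ^ m ∣ x
  · exact ⟨m, le_rfl, 0, by omega, fun _ => rfl, fun h => absurd h (lt_irrefl m), by simpa⟩
  have hx0 : x ≠ 0 := by rintro rfl; exact hdvd (dvd_zero _)
  have hspec := PadicInt.unitCoeff_spec hx0
  have hv : x.valuation < m := by
    by_contra! hle
    exact hdvd (hspec ▸ (pow_dvd_pow _ hle).mul_left _)
  have hv1 : x.valuation ≠ 0 := fun h0 => hx <| by
    rw [hspec, h0, pow_zero, mul_one]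
    exact Units.isUnit _
  exact ⟨x.valuation, hv.le, _, by omega, fun h => absurd h hv.ne, fun _ => Units.isUnit _,
    by rw [← hspec, sub_self]; exact dvd_zero _⟩

open Matrix

theorem one_mem_Kcong (m : ℕ) : (1 : Matrix (Fin 2) (Fin 2) ℤ_[p]) ∈ Kcong p m :=
  ⟨0, by simp⟩

theorem transvection_mem_Kcong {m : ℕ} {x : ℤ_[p]} (hx : (p : ℤ_[p]) ^ m ∣ x) :
    transvection 1 0 x ∈ Kcong p m := by
  obtain ⟨y, rfl⟩ := hx
  exact ⟨single 1 0 y, by simp [transvection, smul_single]⟩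

theorem mul_mem_Borel {g N : Matrix (Fin 2) (Fin 2) ℤ_[p]} (hg : IsUnit g.det) (hN : N.det = 1)
    (h10 : (g * N) 1 0 = 0) : g * N ∈ Borel p :=
  ⟨by rwa [det_mul, hN, mul_one], h10⟩

theorem dosetRel_of_mul_mem_Borel {m : ℕ} {g h N k : Matrix (Fin 2) (Fin 2) ℤ_[p]}
    (hgN : g * N ∈ Borel p) (hk : k ∈ Kcong p m) (hNhk : N * h * k = 1) : DosetRel p m g h :=
  ⟨g * N, hgN, k, hk, by simp only [Matrix.mul_assoc] at hNhk ⊢; rw [hNhk, mul_one]⟩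

theorem γ_zero (m : ℕ) (a : ℤ_[p]) : γ p m 0 a = !![0, -1; 1, a] := by
  simp [γ]

theorem γ_eq_transvection {m i : ℕ} {a : ℤ_[p]} (hi : i ≠ 0) (hia : i = m → a = 0) :
    γ p m i a = transvection 1 0 (a * (p : ℤ_[p]) ^ i) := by
  rw [γ, if_neg hi]
  split_ifs with him
  · rw [hia him, zero_mul, transvection_zero]
  · ext k l
    fin_cases k <;> fin_cases l <;> simp [transvection]

theorem γ_zero_apply_one_zero (m : ℕ) (a : ℤ_[p]) : γ p m 0 a 1 0 = 1 := by
  simp [γ_zero]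

theorem γ_zero_apply_one_one (m : ℕ) (a : ℤ_[p]) : γ p m 0 a 1 1 = a := by
  simp [γ_zero]

theorem γ_apply_one_zero {m i : ℕ} {a : ℤ_[p]} (hi : i ≠ 0) (hia : i = m → a = 0) :
    γ p m i a 1 0 = a * (p : ℤ_[p]) ^ i := by
  simp [γ_eq_transvection p hi hia, transvection]

theorem γ_apply_one_one {m i : ℕ} {a : ℤ_[p]} (hi : i ≠ 0) (hia : i = m → a = 0) :
    γ p m i a 1 1 = 1 := by
  simp [γ_eq_transvection p hi hia, transvection]

theorem dosetRel_γ_zero {m : ℕ} {g : Matrix (Fin 2) (Fin 2) ℤ_[p]} (hg : IsUnit g.det)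
    {c : ℤ_[p]ˣ} (hc : g 1 0 = c) : DosetRel p m g (γ p m 0 (g 1 1 * ↑c⁻¹)) := by
  refine dosetRel_of_mul_mem_Borel p (N := !![g 1 1 * ↑c⁻¹, 1; -1, 0])
    (mul_mem_Borel p hg (by simp [det_fin_two]) ?_) (one_mem_Kcong p m) ?_
  · simp [mul_apply, Fin.sum_univ_two, hc, mul_left_comm (c : ℤ_[p])]
  · rw [γ_zero, mul_one]
    ext k l
    fin_cases k <;> fin_cases l <;> simp [mul_apply, Fin.sum_univ_two]

theorem dosetRel_transvection_of_dvd_sub {m : ℕ} {g : Matrix (Fin 2) (Fin 2) ℤ_[p]}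
    (hg : IsUnit g.det) {d : ℤ_[p]ˣ} (hd : g 1 1 = d) {y : ℤ_[p]}
    (hy : (p : ℤ_[p]) ^ m ∣ g 1 0 * ↑d⁻¹ - y) :
    DosetRel p m g (transvection 1 0 y) := by
  refine dosetRel_of_mul_mem_Borel p (N := transvection 1 0 (-(g 1 0 * ↑d⁻¹)))
    (mul_mem_Borel p hg (det_transvection_of_ne _ _ (by decide) _) ?_)
    (transvection_mem_Kcong p hy) ?_
  · simp [transvection, mul_apply, Fin.sum_univ_two, hd, mul_left_comm (d : ℤ_[p])]
  · rw [transvection_mul_transvection_same _ _ (by decide),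
      transvection_mul_transvection_same _ _ (by decide)]
    simp

theorem DosetRel.exists_isUnit_bottom_row_dvd {m : ℕ} {g h : Matrix (Fin 2) (Fin 2) ℤ_[p]}
    (hr : DosetRel p m g h) :
    ∃ u : ℤ_[p], IsUnit u ∧ (p : ℤ_[p]) ^ m ∣ g 1 0 - u * h 1 0 ∧
      (p : ℤ_[p]) ^ m ∣ g 1 1 - u * h 1 1 := by
  obtain ⟨b, ⟨hb, hb10⟩, k, ⟨A, rfl⟩, rfl⟩ := hr
  have hrow (l : Fin 2) : (b * h * (1 + (p : ℤ_[p]) ^ m • A)) 1 l - b 1 1 * h 1 l =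
      (p : ℤ_[p]) ^ m * (b 1 1 * (h * A) 1 l) := by
    fin_cases l <;> simp [mul_apply, Fin.sum_univ_two, hb10] <;> ring
  refine ⟨b 1 1, ?_, ⟨_, hrow 0⟩, ⟨_, hrow 1⟩⟩
  rw [det_fin_two, hb10, mul_zero, sub_zero] at hb
  exact isUnit_of_mul_isUnit_right hb

theorem exists_dosetRel_γ {m : ℕ} (hm : m ≠ 0) {g : Matrix (Fin 2) (Fin 2) ℤ_[p]}
    (hg : IsUnit g.det) :
    ∃ i ≤ m, ∃ a : ℤ_[p], (i = m → a = 0) ∧ (1 ≤ i → i < m → IsUnit a) ∧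
      DosetRel p m g (γ p m i a) := by
  by_cases hc : IsUnit (g 1 0)
  · obtain ⟨c, hc⟩ := hc
    exact ⟨0, Nat.zero_le m, _, fun h => absurd h.symm hm, fun h => absurd h (by omega),
      dosetRel_γ_zero p hg hc.symm⟩
  obtain ⟨d, hd⟩ := (isUnit_or_isUnit_of_isUnit_det hg).resolve_left hc
  have hx : ¬IsUnit (g 1 0 * ↑d⁻¹) := by rwa [Units.isUnit_mul_units]
  obtain ⟨i, hi, a, hi1, hia, hiu, hdvd⟩ := exists_pow_dvd_sub_mul_p_pow p hm hx
  refine ⟨i, hi, a, hia, fun _ => hiu, ?_⟩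
  rw [γ_eq_transvection p (by omega) hia]
  exact dosetRel_transvection_of_dvd_sub p hg hd.symm hdvd

theorem eq_and_dvd_sub_of_dosetRel_γ {m i j : ℕ} (hm : m ≠ 0) {a b : ℤ_[p]} (hi : i ≤ m)
    (hj : j ≤ m) (hia : i = m → a = 0) (hiu : 1 ≤ i → i < m → IsUnit a)
    (hjb : j = m → b = 0) (hju : 1 ≤ j → j < m → IsUnit b)
    (hr : DosetRel p m (γ p m i a) (γ p m j b)) :
    i = j ∧ (p : ℤ_[p]) ^ (m - i) ∣ a - b := by
  have hp := PadicInt.prime_p (p := p)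
  obtain ⟨u, hu, h10, h11⟩ := hr.exists_isUnit_bottom_row_dvd
  rcases eq_or_ne i 0 with rfl | hi0 <;> rcases eq_or_ne j 0 with rfl | hj0
  · rw [γ_zero_apply_one_zero, γ_zero_apply_one_zero, mul_one] at h10
    rw [γ_zero_apply_one_one, γ_zero_apply_one_one] at h11
    exact ⟨rfl, dvd_sub_of_dvd_one_sub_of_dvd_sub_mul h10 h11⟩
  · rw [γ_zero_apply_one_zero, γ_apply_one_zero p hj0 hjb] at h10
    exact absurd h10 (not_pow_dvd_sub_of_isUnit hp.not_isUnit hm isUnit_one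
      (((dvd_pow_self _ hj0).mul_left b).mul_left u))
  · rw [γ_apply_one_zero p hi0 hia, γ_zero_apply_one_zero, mul_one] at h10
    exact absurd (dvd_sub_comm.mp h10) (not_pow_dvd_sub_of_isUnit hp.not_isUnit hm hu
      ((dvd_pow_self _ hi0).mul_left a))
  · rw [γ_apply_one_zero p hi0 hia, γ_apply_one_zero p hj0 hjb] at h10
    rw [γ_apply_one_one p hi0 hia, γ_apply_one_one p hj0 hjb, mul_one] at h11
    exact eq_and_dvd_sub_of_pow_dvd_sub hp.ne_zero hp.not_isUnit hi hj hia
      (hiu (by omega)) hjb (hju (by omega)) (dvd_sub_of_dvd_one_sub_of_dvd_sub_mul h11 h10)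

theorem doset_decomposition (m : ℕ) (hm : 1 ≤ m) :
    (∀ g : Matrix (Fin 2) (Fin 2) ℤ_[p], IsUnit g.det →
      ∃ i ≤ m, ∃ a : ℤ_[p],
        (i = m → a = 0) ∧ (1 ≤ i → i < m → IsUnit a) ∧
        DosetRel p m g (γ p m i a)) ∧
    (∀ i ≤ m, ∀ j ≤ m, ∀ a b : ℤ_[p],
      (i = m → a = 0) → (1 ≤ i → i < m → IsUnit a) →
      (j = m → b = 0) → (1 ≤ j → j < m → IsUnit b) →
      DosetRel p m (γ p m i a) (γ p m j b) →
      i = j ∧ ‖a - b‖ ≤ (p : ℝ) ^ (-((m : ℤ) - (i : ℤ)))) := by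
  have hm0 : m ≠ 0 := by omega
  refine ⟨fun g hg => exists_dosetRel_γ p hm0 hg, fun i hi j hj a b hia hiu hjb hju hr => ?_⟩
  obtain ⟨rfl, hdvd⟩ := eq_and_dvd_sub_of_dosetRel_γ p hm0 hi hj hia hiu hjb hju hr
  refine ⟨rfl, ?_⟩
  have := (PadicInt.norm_le_pow_iff_mem_span_pow (a - b) (m - i)).mpr
    (Ideal.mem_span_singleton.mpr hdvd)
  rwa [Nat.cast_sub hi] at this

end Stmt1
end

section
/- Let z = x + iy ∈ ℍ with y ≥ √3/2, let p be an odd prime, λ ≥ 1 an integer with p^λ > 4, and A = [[a,b],[c,d]] ∈ M₂(ℤ) with det A = 1, A ≡ 1 mod p^λ, and u(Az, z) ≤ 1 where u denotes the standard hyperbolic distance function u(z₁,z₂) = |z₁−z₂|²/(4·Im z₁·Im z₂). Then c = 0, i.e. A is upper triangular. -/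
/-!
Write `N = |cz + d|²`. Since `det A = 1`, `Im (Az) = y / N`, and already the imaginary parts alone
give `u(Az, z) ≥ (Im Az - y)² / (4 Im Az · y) = (N - 1)² / (4N)`; so `u(Az, z) ≤ 1` forces
`N ≤ 3 + 2√2 < 6`. On the other hand `N ≥ c² y² ≥ 3c²/4`, hence `|c| ≤ 2`, and a multiple of
`p^λ > 4` of absolute value at most `2` is `0`.
-/

open Complex

/-- The function `u` of the statement (Iwaniec's point-pair invariant). -/
noncomputable def pointPairInvariant (w z : ℂ) : ℝ :=
  ‖w - z‖ ^ 2 / (4 * w.im * z.im)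

lemma sq_im_sub_le_of_pointPairInvariant_le_one {w z : ℂ} (hw : 0 < w.im) (hz : 0 < z.im)
    (hu : pointPairInvariant w z ≤ 1) : (w.im - z.im) ^ 2 ≤ 4 * w.im * z.im := by
  have hnorm : ‖w - z‖ ^ 2 ≤ 4 * w.im * z.im :=
    (div_le_one (by positivity)).mp hu
  calc (w.im - z.im) ^ 2 = (w - z).im * (w - z).im := by rw [sub_im]; ring
    _ ≤ normSq (w - z) := im_sq_le_normSq _
    _ = ‖w - z‖ ^ 2 := (Complex.sq_norm _).symm
    _ ≤ 4 * w.im * z.im := hnorm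

lemma im_mobius (a b c d : ℝ) (z : ℂ) :
    ((a * z + b) / (c * z + d)).im = (a * d - b * c) * z.im / normSq (c * z + d) := by
  simp only [div_im, add_re, add_im, mul_re, mul_im, ofReal_re, ofReal_im]
  ring

lemma sq_mul_sq_im_le_normSq (c d : ℝ) (z : ℂ) : c ^ 2 * z.im ^ 2 ≤ normSq (c * z + d) := by
  have h := im_sq_le_normSq (c * z + d)
  simp only [add_im, mul_im, ofReal_re, ofReal_im] at h
  nlinarith

lemma normSq_lt_six_of_pointPairInvariant_le_one {a b c d : ℝ} (hdet : a * d - b * c = 1)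
    {z : ℂ} (hz : 0 < z.im) (hc : c ≠ 0)
    (hu : pointPairInvariant ((a * z + b) / (c * z + d)) z ≤ 1) :
    normSq (c * z + d) < 6 := by
  set N := normSq (c * z + d)
  set y := z.im
  have hN : 0 < N :=
    lt_of_lt_of_le (by positivity) (sq_mul_sq_im_le_normSq c d z)
  have him : ((a * z + b) / (c * z + d)).im = y / N := by
    rw [im_mobius, hdet, one_mul]
  have key := sq_im_sub_le_of_pointPairInvariant_le_one (by rw [him]; positivity) hz hu
  rw [him] at key
  have hquad : (1 - N) ^ 2 ≤ 4 * N := by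
    have hexp : (y / N - y) ^ 2 * N ^ 2 = y ^ 2 * (1 - N) ^ 2 := by field_simp
    have hexp' : 4 * (y / N) * y * N ^ 2 = y ^ 2 * (4 * N) := by field_simp
    have := mul_le_mul_of_nonneg_right key (sq_nonneg N)
    rw [hexp, hexp'] at this
    exact le_of_mul_le_mul_left this (by positivity)
  by_contra! h6
  nlinarith [mul_nonneg (sub_nonneg.2 h6) hN.le]

lemma abs_lt_three_of_normSq_lt_six {c d : ℤ} {z : ℂ} (hz : Real.sqrt 3 / 2 ≤ z.im)
    (hN : normSq (c * z + d) < 6) : |c| < 3 := by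
  have hy2 : 3 / 4 ≤ z.im ^ 2 := by
    have := pow_le_pow_left₀ (by positivity) hz 2
    rwa [div_pow, Real.sq_sqrt (by norm_num), show (2 : ℝ) ^ 2 = 4 by norm_num] at this
  have hcz := sq_mul_sq_im_le_normSq c d z
  push_cast at hcz
  have hc2 : (c : ℝ) ^ 2 < 3 ^ 2 := by nlinarith
  exact abs_lt_of_sq_lt_sq (by exact_mod_cast hc2) (by norm_num)

theorem congruence_matrix_upper_triangular_general
    (p : ℕ) (l : ℕ) (hpl : 4 < p ^ l)
    (x y : ℝ) (hy : Real.sqrt 3 / 2 ≤ y)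
    (A : Matrix (Fin 2) (Fin 2) ℤ) (hdet : A.det = 1)
    (hcong : ∀ i j, ((p : ℤ)) ^ l ∣ (A i j - (1 : Matrix (Fin 2) (Fin 2) ℤ) i j))
    (hu : ‖
          (((A 0 0 : ℂ) * (x + y * Complex.I) + (A 0 1 : ℂ)) /
              ((A 1 0 : ℂ) * (x + y * Complex.I) + (A 1 1 : ℂ)) -
            (x + y * Complex.I))‖ ^ 2 /
        (4 * (((A 0 0 : ℂ) * (x + y * Complex.I) + (A 0 1 : ℂ)) /
              ((A 1 0 : ℂ) * (x + y * Complex.I) + (A 1 1 : ℂ))).im * y) ≤ 1) :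
    A 1 0 = 0 := by
  have hdvd : (p : ℤ) ^ l ∣ A 1 0 := by simpa using hcong 1 0
  by_contra hc
  have hzim : (x + y * I).im = y := by simp
  have hy0 : 0 < y := lt_of_lt_of_le (by positivity) hy
  have hdetR : (A 0 0 : ℝ) * A 1 1 - A 0 1 * A 1 0 = 1 := by
    rw [Matrix.det_fin_two] at hdet
    exact_mod_cast hdet
  have hN := normSq_lt_six_of_pointPairInvariant_le_one hdetR (z := x + y * I)
    (by rw [hzim]; exact hy0) (by exact_mod_cast hc)
    (by simpa [pointPairInvariant, hzim] using hu)
  have hc3 := abs_lt_three_of_normSq_lt_six (c := A 1 0) (by rw [hzim]; exact hy)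
    (by simpa using hN)
  have hpl' : (4 : ℤ) < (p : ℤ) ^ l := by exact_mod_cast hpl
  exact hc (Int.eq_zero_of_abs_lt_dvd hdvd (by linarith))

/-- Let `z = x + iy ∈ ℍ` with `y ≥ √3/2`, `p` an odd prime, `λ ≥ 1` with
`p^λ > 4`, and `A = [[a,b],[c,d]] ∈ M₂(ℤ)` with `det A = 1`, `A ≡ 1 mod p^λ`, and
`u(Az, z) ≤ 1`, where `u(z₁,z₂) = |z₁-z₂|²/(4 Im z₁ Im z₂)`. Then `c = 0`. -/
theorem congruence_matrix_upper_triangular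
    (p : ℕ) (hp : p.Prime) (hodd : p ≠ 2) (l : ℕ) (hl : 1 ≤ l) (hpl : 4 < p ^ l)
    (x y : ℝ) (hy : Real.sqrt 3 / 2 ≤ y)
    (A : Matrix (Fin 2) (Fin 2) ℤ) (hdet : A.det = 1)
    (hcong : ∀ i j, ((p : ℤ)) ^ l ∣ (A i j - (1 : Matrix (Fin 2) (Fin 2) ℤ) i j))
    (hu : ‖
          (((A 0 0 : ℂ) * (x + y * Complex.I) + (A 0 1 : ℂ)) /
              ((A 1 0 : ℂ) * (x + y * Complex.I) + (A 1 1 : ℂ)) -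
            (x + y * Complex.I))‖ ^ 2 /
        (4 * (((A 0 0 : ℂ) * (x + y * Complex.I) + (A 0 1 : ℂ)) /
              ((A 1 0 : ℂ) * (x + y * Complex.I) + (A 1 1 : ℂ))).im * y) ≤ 1) :
    A 1 0 = 0 :=
  congruence_matrix_upper_triangular_general p l hpl x y hy A hdet hcong hu
end
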